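/- Let x ∈ ℝ^{p+q} be nonzero with x^j = 0 for all 1 ≤ j ≤ p−q and x^{p−i+1} + x^{p+i} = 0 for all 1 ≤ i ≤ q, and let l := max{ j ∈ {1,…,q} : x^{p+j} ≠ 0 }. Then dim 𝔫_x = q(p−1) − (l−1); equivalently, dim 𝔫 − dim 𝔫_x = l−1. -/

import Mathlib

open Matrix

noncomputable section

/-- 1-based standard basis vector `e i` of `ℝ^n` (zero if `i` is out of range). -/
def stdE (n i : ℕ) : Fin n → ℝ := fun j => if (j : ℕ) + 1 = i then 1 else 0

/-- `w i := e_{p-i+1} - e_{p+i}`. -/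
def wVec (p q i : ℕ) : Fin (p + q) → ℝ := stdE (p + q) (p - i + 1) - stdE (p + q) (p + i)

/-- `v i := e_{p-i+1} + e_{p+i}`. -/
def vVec (p q i : ℕ) : Fin (p + q) → ℝ := stdE (p + q) (p - i + 1) + stdE (p + q) (p + i)

/-- The scalar product of signature `(p,q)` on `ℝ^{p+q}`. -/
def ip (p q : ℕ) (x y : Fin (p + q) → ℝ) : ℝ :=
  ∑ i : Fin (p + q), (if (i : ℕ) < p then (1 : ℝ) else -1) * x i * y i

/-- The matrix `J = diag(I_p, -I_q)`. -/
def Jmat (p q : ℕ) : Matrix (Fin (p + q)) (Fin (p + q)) ℝ :=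
  Matrix.diagonal (fun i => if (i : ℕ) < p then (1 : ℝ) else -1)

/-- Entry of a square matrix, with 1-based indices (0 outside the range). -/
def ent {n : ℕ} (X : Matrix (Fin n) (Fin n) ℝ) (i j : ℕ) : ℝ :=
  if h : i - 1 < n ∧ j - 1 < n then X ⟨i - 1, h.1⟩ ⟨j - 1, h.2⟩ else 0

/-- Coordinate of a vector, with 1-based index (0 outside the range). -/
def vent {n : ℕ} (x : Fin n → ℝ) (i : ℕ) : ℝ :=
  if h : i - 1 < n then x ⟨i - 1, h⟩ else 0

lemma ent_zero {n : ℕ} (i j : ℕ) : ent (0 : Matrix (Fin n) (Fin n) ℝ) i j = 0 := by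
  unfold ent; split <;> simp

lemma ent_add {n : ℕ} (X Y : Matrix (Fin n) (Fin n) ℝ) (i j : ℕ) :
    ent (X + Y) i j = ent X i j + ent Y i j := by
  unfold ent; split <;> simp [Matrix.add_apply]

lemma ent_smul {n : ℕ} (c : ℝ) (X : Matrix (Fin n) (Fin n) ℝ) (i j : ℕ) :
    ent (c • X) i j = c * ent X i j := by
  unfold ent; split <;> simp [Matrix.smul_apply]

/-- The Lie algebra `𝔰𝔬(p,q)`, as a set of matrices. -/
def soSet (p q : ℕ) : Set (Matrix (Fin (p + q)) (Fin (p + q)) ℝ) :=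
  {X | Xᵀ * Jmat p q + Jmat p q * X = 0}

lemma soSet_zero (p q : ℕ) : (0 : Matrix (Fin (p + q)) (Fin (p + q)) ℝ) ∈ soSet p q := by
  simp [soSet]

lemma soSet_add (p q : ℕ) {X Y : Matrix (Fin (p + q)) (Fin (p + q)) ℝ}
    (hX : X ∈ soSet p q) (hY : Y ∈ soSet p q) : X + Y ∈ soSet p q := by
  simp only [soSet, Set.mem_setOf_eq] at *
  rw [Matrix.transpose_add, Matrix.add_mul, Matrix.mul_add,
    show Xᵀ * Jmat p q + Yᵀ * Jmat p q + (Jmat p q * X + Jmat p q * Y)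
      = (Xᵀ * Jmat p q + Jmat p q * X) + (Yᵀ * Jmat p q + Jmat p q * Y) by abel,
    hX, hY, add_zero]

lemma soSet_smul (p q : ℕ) (c : ℝ) {X : Matrix (Fin (p + q)) (Fin (p + q)) ℝ}
    (hX : X ∈ soSet p q) : c • X ∈ soSet p q := by
  simp only [soSet, Set.mem_setOf_eq] at *
  rw [Matrix.transpose_smul, Matrix.smul_mul, Matrix.mul_smul, ← smul_add, hX, smul_zero]

/-- The set `𝔭` of symmetric elements of `𝔰𝔬(p,q)` (Cartan decomposition). -/
def pSet (p q : ℕ) : Set (Matrix (Fin (p + q)) (Fin (p + q)) ℝ) :=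
  {X | X ∈ soSet p q ∧ Xᵀ = X}

/-- The nilpotent Iwasawa factor `𝔫`, as a set of matrices; the conditions are the
entry conditions on the blocks `A`, `B`, `D` (1-based indices; `A i j = ent X i j`,
`B i l = ent X i (p + l)`, `D i j = ent X (p + i) (p + j)`). -/
def nSet (p q : ℕ) : Set (Matrix (Fin (p + q)) (Fin (p + q)) ℝ) :=
  {X | X ∈ soSet p q ∧
    (∀ i j, 1 ≤ i → i ≤ p - q → 1 ≤ j → j ≤ p - q → ent X i j = 0) ∧
    (∀ l, 1 ≤ l → l ≤ q → ent X (p - l + 1) (p + l) = 0) ∧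
    (∀ k l, 1 ≤ k → k ≤ p - q → 1 ≤ l → l ≤ q →
      ent X k (p - l + 1) = ent X k (p + l)) ∧
    (∀ i j, 1 ≤ i → i < j → j ≤ q →
      ent X (p + 1 - j) (p + 1 - i) = ent X (p + 1 - j) (p + i)) ∧
    (∀ i j, 1 ≤ i → i < j → j ≤ q →
      ent X (p + i) (p + j) = - ent X (p + 1 - i) (p + j))}

/-- The abelian factor `𝔞`, as a set of matrices: all entries vanish except the
pairs in positions `(p-l+1, p+l)` and `(p+l, p-l+1)`, `1 ≤ l ≤ q`, which are equal. -/
def aSet (p q : ℕ) : Set (Matrix (Fin (p + q)) (Fin (p + q)) ℝ) :=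
  {X | (∀ l, 1 ≤ l → l ≤ q → ent X (p - l + 1) (p + l) = ent X (p + l) (p - l + 1)) ∧
    (∀ i j, 1 ≤ i → i ≤ p + q → 1 ≤ j → j ≤ p + q →
      (¬ ∃ l, 1 ≤ l ∧ l ≤ q ∧ ((i = p - l + 1 ∧ j = p + l) ∨ (i = p + l ∧ j = p - l + 1))) →
      ent X i j = 0)}

/-- `𝔨₀`: skew-symmetric upper-left `(p-q)×(p-q)` block, all other entries zero. -/
def kSet (p q : ℕ) : Set (Matrix (Fin (p + q)) (Fin (p + q)) ℝ) :=
  {X | (∀ i j, 1 ≤ i → i ≤ p - q → 1 ≤ j → j ≤ p - q → ent X i j = - ent X j i) ∧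
    (∀ i j, 1 ≤ i → i ≤ p + q → 1 ≤ j → j ≤ p + q →
      ¬(i ≤ p - q ∧ j ≤ p - q) → ent X i j = 0)}

/-- The nilpotent Iwasawa factor `𝔫` as an `ℝ`-subspace of `M_{p+q}(ℝ)`. -/
def nSub (p q : ℕ) : Submodule ℝ (Matrix (Fin (p + q)) (Fin (p + q)) ℝ) where
  carrier := nSet p q
  zero_mem' := by
    refine ⟨soSet_zero p q, ?_, ?_, ?_, ?_, ?_⟩ <;> intros <;> simp [ent_zero]
  add_mem' := by
    rintro X Y ⟨h0, h1, h2, h3, h4, h5⟩ ⟨g0, g1, g2, g3, g4, g5⟩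
    refine ⟨soSet_add p q h0 g0, ?_, ?_, ?_, ?_, ?_⟩
    · intro i j hi hi' hj hj'
      rw [ent_add, h1 i j hi hi' hj hj', g1 i j hi hi' hj hj', add_zero]
    · intro l hl hl'
      rw [ent_add, h2 l hl hl', g2 l hl hl', add_zero]
    · intro k l hk hk' hl hl'
      rw [ent_add, ent_add, h3 k l hk hk' hl hl', g3 k l hk hk' hl hl']
    · intro i j hi hij hj
      rw [ent_add, ent_add, h4 i j hi hij hj, g4 i j hi hij hj]
    · intro i j hi hij hj
      rw [ent_add, ent_add, h5 i j hi hij hj, g5 i j hi hij hj]; ring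
  smul_mem' := by
    rintro c X ⟨h0, h1, h2, h3, h4, h5⟩
    refine ⟨soSet_smul p q c h0, ?_, ?_, ?_, ?_, ?_⟩
    · intro i j hi hi' hj hj'
      rw [ent_smul, h1 i j hi hi' hj hj', mul_zero]
    · intro l hl hl'
      rw [ent_smul, h2 l hl hl', mul_zero]
    · intro k l hk hk' hl hl'
      rw [ent_smul, ent_smul, h3 k l hk hk' hl hl']
    · intro i j hi hij hj
      rw [ent_smul, ent_smul, h4 i j hi hij hj]
    · intro i j hi hij hj
      rw [ent_smul, ent_smul, h5 i j hi hij hj]; ring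

/-- The abelian factor `𝔞` as an `ℝ`-subspace of `M_{p+q}(ℝ)`. -/
def aSub (p q : ℕ) : Submodule ℝ (Matrix (Fin (p + q)) (Fin (p + q)) ℝ) where
  carrier := aSet p q
  zero_mem' := by
    refine ⟨?_, ?_⟩ <;> intros <;> simp [ent_zero]
  add_mem' := by
    rintro X Y ⟨h1, h2⟩ ⟨g1, g2⟩
    refine ⟨?_, ?_⟩
    · intro l hl hl'
      rw [ent_add, ent_add, h1 l hl hl', g1 l hl hl']
    · intro i j hi hi' hj hj' hne
      rw [ent_add, h2 i j hi hi' hj hj' hne, g2 i j hi hi' hj hj' hne, add_zero]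
  smul_mem' := by
    rintro c X ⟨h1, h2⟩
    refine ⟨?_, ?_⟩
    · intro l hl hl'
      rw [ent_smul, ent_smul, h1 l hl hl']
    · intro i j hi hi' hj hj' hne
      rw [ent_smul, h2 i j hi hi' hj hj' hne, mul_zero]

/-- `𝔨₀` as an `ℝ`-subspace of `M_{p+q}(ℝ)`. -/
def kSub (p q : ℕ) : Submodule ℝ (Matrix (Fin (p + q)) (Fin (p + q)) ℝ) where
  carrier := kSet p q
  zero_mem' := by
    refine ⟨?_, ?_⟩ <;> intros <;> simp [ent_zero]
  add_mem' := by
    rintro X Y ⟨h1, h2⟩ ⟨g1, g2⟩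
    refine ⟨?_, ?_⟩
    · intro i j hi hi' hj hj'
      rw [ent_add, ent_add, h1 i j hi hi' hj hj', g1 i j hi hi' hj hj']; ring
    · intro i j hi hi' hj hj' hne
      rw [ent_add, h2 i j hi hi' hj hj' hne, g2 i j hi hi' hj hj' hne, add_zero]
  smul_mem' := by
    rintro c X ⟨h1, h2⟩
    refine ⟨?_, ?_⟩
    · intro i j hi hi' hj hj'
      rw [ent_smul, ent_smul, h1 i j hi hi' hj hj']; ring
    · intro i j hi hi' hj hj' hne
      rw [ent_smul, h2 i j hi hi' hj hj' hne, mul_zero]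

/-- The subspace `{X ∈ M_n(ℝ) : X x = 0}`. -/
def kerAt {n : ℕ} (x : Fin n → ℝ) : Submodule ℝ (Matrix (Fin n) (Fin n) ℝ) where
  carrier := {X | X *ᵥ x = 0}
  zero_mem' := by simp [Matrix.zero_mulVec]
  add_mem' := by
    intro X Y hX hY
    simp only [Set.mem_setOf_eq] at *
    rw [Matrix.add_mulVec, hX, hY, add_zero]
  smul_mem' := by
    intro c X hX
    simp only [Set.mem_setOf_eq] at *
    rw [Matrix.smul_mulVec, hX, smul_zero]

/-- The exponential of a matrix, as a unit of `M_n(ℝ)`, i.e. an element of `GL(n, ℝ)`. -/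
def expUnit {n : ℕ} (X : Matrix (Fin n) (Fin n) ℝ) : (Matrix (Fin n) (Fin n) ℝ)ˣ where
  val := NormedSpace.exp X
  inv := NormedSpace.exp (-X)
  val_inv := by
    rw [← Matrix.exp_add_of_commute X (-X) (Commute.neg_right (Commute.refl X)),
      add_neg_cancel, NormedSpace.exp_zero]
  inv_val := by
    rw [← Matrix.exp_add_of_commute (-X) X (Commute.neg_left (Commute.refl X)),
      neg_add_cancel, NormedSpace.exp_zero]

/-- The subgroup `N = exp(𝔫)` of `GL(p+q, ℝ)` generated by exponentials of elements of `𝔫`. -/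
def Ngrp (p q : ℕ) : Subgroup (Matrix (Fin (p + q)) (Fin (p + q)) ℝ)ˣ :=
  Subgroup.closure {g | ∃ X ∈ nSet p q, g = expUnit X}

/-- The subgroup `AN` of `GL(p+q, ℝ)` generated by exponentials of elements of `𝔞 ∪ 𝔫`. -/
def ANgrp (p q : ℕ) : Subgroup (Matrix (Fin (p + q)) (Fin (p + q)) ℝ)ˣ :=
  Subgroup.closure {g | ∃ X ∈ aSet p q ∪ nSet p q, g = expUnit X}

/-- The subgroup `Q = K₀AN` of `GL(p+q, ℝ)` generated by exponentials of `𝔨₀ ∪ 𝔞 ∪ 𝔫`. -/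
def Qgrp (p q : ℕ) : Subgroup (Matrix (Fin (p + q)) (Fin (p + q)) ℝ)ˣ :=
  Subgroup.closure {g | ∃ X ∈ kSet p q ∪ aSet p q ∪ nSet p q, g = expUnit X}

/-- The orbit `G(x)` of a point `x ∈ ℝ^n` under a subgroup `G` of `GL(n, ℝ)`. -/
def orb {n : ℕ} (G : Subgroup (Matrix (Fin n) (Fin n) ℝ)ˣ) (x : Fin n → ℝ) :
    Set (Fin n → ℝ) :=
  {v | ∃ g ∈ G, (g : Matrix (Fin n) (Fin n) ℝ) *ᵥ x = v}

end

/-!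
An element of `𝔫` is determined by its `B`-block, and this block is free apart from its
vanishing antidiagonal `B_{p-k+1,k}`; hence `dim 𝔫 = pq - q`. The hypotheses on `x` say that
`x = ∑ tᵢ wᵢ` with `wᵢ = e_{p-i+1} - e_{p+i}`, `t_l ≠ 0` and `tᵢ = 0` for `i > l`. For `X ∈ 𝔫`,
`X x` vanishes in the first `p - q` coordinates, and its coordinates `p + j` and `p - j + 1` are
`±∑_{i > j} tᵢ (B_{p-j+1,i} + B_{p-i+1,j})`. These vanish automatically for `j ≥ l`, while the
remaining `l - 1` linear forms in `B` are independent: `B_{p-j+1,l}` occurs only in the `j`-th one,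
with coefficient `t_l ≠ 0`. So `𝔫_x` has codimension `l - 1` in `𝔫`.
-/

open Module

namespace IwasawaN

lemma ent_eq_apply {n : ℕ} (X : Matrix (Fin n) (Fin n) ℝ) (a b : Fin n) {i j : ℕ}
    (hi : i = a + 1) (hj : j = b + 1) : ent X i j = X a b := by
  subst hi hj
  simp [ent]

lemma vent_eq_apply {n : ℕ} (x : Fin n → ℝ) (a : Fin n) {i : ℕ} (hi : i = a + 1) :
    vent x i = x a := by
  subst hi
  simp [vent]

lemma forall_one_le_le_iff {n : ℕ} {P : ℕ → Prop} :
    (∀ k, 1 ≤ k → k ≤ n → P k) ↔ ∀ i : Fin n, P (i + 1) :=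
  ⟨fun h i => h _ (by omega) i.isLt,
    fun h k hk hkn => Nat.sub_add_cancel hk ▸ h ⟨k - 1, by omega⟩⟩

lemma forall_one_le_le_one_le_le_iff {m n : ℕ} {P : ℕ → ℕ → Prop} :
    (∀ k l, 1 ≤ k → k ≤ m → 1 ≤ l → l ≤ n → P k l) ↔
      ∀ (a : Fin m) (b : Fin n), P (a + 1) (b + 1) :=
  ⟨fun h a b => h _ _ (by omega) a.isLt (by omega) b.isLt,
    fun h k l hk _ hl _ => Nat.sub_add_cancel hk ▸ Nat.sub_add_cancel hl ▸
      h ⟨k - 1, by omega⟩ ⟨l - 1, by omega⟩⟩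

lemma forall_one_le_lt_le_iff {n : ℕ} {P : ℕ → ℕ → Prop} :
    (∀ k l, 1 ≤ k → k < l → l ≤ n → P k l) ↔ ∀ i j : Fin n, i < j → P (i + 1) (j + 1) :=
  ⟨fun h i j hij => h _ _ (by omega) (by simpa using hij) j.isLt,
    fun h k l hk hkl hl => Nat.sub_add_cancel hk ▸ Nat.sub_add_cancel (hk.trans_lt hkl).le ▸
      h ⟨k - 1, by omega⟩ ⟨l - 1, by omega⟩ (Fin.mk_lt_mk.2 (by omega))⟩

variable {p q : ℕ}

lemma Jmat_mul_self : Jmat p q * Jmat p q = 1 := by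
  simp only [Jmat, Matrix.diagonal_mul_diagonal, ← Matrix.diagonal_one]
  congr 1
  ext i
  split_ifs <;> norm_num

lemma sub_Jmat_mul_transpose_mul_Jmat_mem_soSet (U : Matrix (Fin (p + q)) (Fin (p + q)) ℝ) :
    U - Jmat p q * Uᵀ * Jmat p q ∈ soSet p q := by
  have hJ : (Jmat p q)ᵀ = Jmat p q := Matrix.diagonal_transpose _
  show (U - Jmat p q * Uᵀ * Jmat p q)ᵀ * Jmat p q + Jmat p q * (U - Jmat p q * Uᵀ * Jmat p q) = 0
  simp only [Matrix.transpose_sub, Matrix.transpose_mul, Matrix.transpose_transpose, hJ,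
    Matrix.sub_mul, Matrix.mul_sub, Matrix.mul_assoc, Jmat_mul_self]
  simp only [← Matrix.mul_assoc, Jmat_mul_self, Matrix.one_mul, Matrix.mul_one]
  abel

lemma eq_zero_of_mem_soSet_of_upper_eq_zero {X : Matrix (Fin (p + q)) (Fin (p + q)) ℝ}
    (hX : X ∈ soSet p q) (hup : ∀ r c : Fin (p + q), r < c → X r c = 0) : X = 0 := by
  ext r c
  have h := congrFun (congrFun hX r) c
  simp only [Jmat, Matrix.add_apply, Matrix.mul_diagonal, Matrix.diagonal_mul,
    Matrix.transpose_apply, Matrix.zero_apply] at h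
  rcases lt_trichotomy r c with hrc | rfl | hrc
  · exact hup r c hrc
  · split_ifs at h <;> simp only [Matrix.zero_apply] <;> linarith
  · rw [hup c r hrc] at h
    split_ifs at h <;> simp only [Matrix.zero_apply] <;> linarith

-- `up i` and `down i` are the 0-based positions of the paper's indices `p + i + 1` and `p - i`.
def up (i : Fin q) : Fin (p + q) := Fin.natAdd p i

def down (i : Fin q) : Fin (p + q) := ⟨p - 1 - i, by omega⟩

@[simp] lemma val_up (i : Fin q) : ((up i : Fin (p + q)) : ℕ) = p + i := rfl

@[simp] lemma val_down (i : Fin q) : ((down i : Fin (p + q)) : ℕ) = p - 1 - i := rfl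

lemma up_injective : Function.Injective (up : Fin q → Fin (p + q)) :=
  Fin.natAdd_injective q p

lemma down_injective (hqp : q ≤ p) : Function.Injective (down : Fin q → Fin (p + q)) := by
  intro i j h
  have h' := congrArg Fin.val h
  rw [val_down, val_down] at h'
  omega

lemma down_ne_up (hqp : q ≤ p) (i j : Fin q) : (down i : Fin (p + q)) ≠ up j := by
  rw [Ne, Fin.ext_iff, val_down, val_up]
  omega

lemma exists_eq_up (r : Fin (p + q)) (h : p ≤ r) : ∃ i : Fin q, r = up i :=
  ⟨⟨r - p, by omega⟩, Fin.ext (by simp; omega)⟩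

lemma exists_eq_down (hqp : q ≤ p) (r : Fin (p + q)) (h₁ : p - q ≤ r) (h₂ : (r : ℕ) < p) :
    ∃ i : Fin q, r = down i :=
  ⟨⟨p - 1 - r, by omega⟩, Fin.ext (by simp; omega)⟩

lemma mem_nSet_iff (hqp : q ≤ p) (X : Matrix (Fin (p + q)) (Fin (p + q)) ℝ) :
    X ∈ nSet p q ↔ X ∈ soSet p q ∧
      (∀ a b : Fin (p - q), X (Fin.castLE (by omega) a) (Fin.castLE (by omega) b) = 0) ∧
      (∀ i : Fin q, X (down i) (up i) = 0) ∧
      (∀ (a : Fin (p - q)) (i : Fin q),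
        X (Fin.castLE (by omega) a) (down i) = X (Fin.castLE (by omega) a) (up i)) ∧
      (∀ i j : Fin q, i < j → X (down j) (down i) = X (down j) (up i)) ∧
      (∀ i j : Fin q, i < j → X (up i) (up j) = - X (down i) (up j)) := by
  simp only [nSet, Set.mem_ofPred_eq, forall_one_le_le_one_le_le_iff, forall_one_le_le_iff,
    forall_one_le_lt_le_iff]
  refine and_congr Iff.rfl (and_congr ?_ (and_congr ?_ (and_congr ?_ (and_congr ?_ ?_))))
  · exact forall₂_congr fun a b => by
      rw [ent_eq_apply X (Fin.castLE (by omega) a) (Fin.castLE (by omega) b) (by simp) (by simp)]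
  · exact forall_congr' fun i => by
      rw [ent_eq_apply X (down i) (up i) (by simp; omega) (by simp; omega)]
  · exact forall₂_congr fun a i => by
      rw [ent_eq_apply X (Fin.castLE (by omega) a) (down i) (by simp) (by simp; omega),
        ent_eq_apply X (Fin.castLE (by omega) a) (up i) (by simp) (by simp; omega)]
  · exact forall₂_congr fun i j => imp_congr_right fun _ => by
      rw [ent_eq_apply X (down j) (down i) (by simp; omega) (by simp; omega),
        ent_eq_apply X (down j) (up i) (by simp; omega) (by simp; omega)]
  · exact forall₂_congr fun i j => imp_congr_right fun _ => by
      rw [ent_eq_apply X (up i) (up j) (by simp; omega) (by simp; omega),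
        ent_eq_apply X (down i) (up j) (by simp; omega) (by simp; omega)]

/-- 0-based positions `(a, m)` in the `B`-block, off its antidiagonal. -/
abbrev BIndex (p q : ℕ) := {am : Fin p × Fin q // (am.1 : ℕ) + am.2 + 1 ≠ p}

lemma card_bIndex (hqp : q ≤ p) : Fintype.card (BIndex p q) = p * q - q := by
  have hanti : Fintype.card {am : Fin p × Fin q // (am.1 : ℕ) + am.2 + 1 = p} = q := by
    refine (Fintype.card_congr ?_).trans (Fintype.card_fin q)
    exact
      { toFun := fun am => am.1.2
        invFun := fun m => ⟨(⟨p - 1 - m, by omega⟩, m), by simp; omega⟩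
        left_inv := by
          rintro ⟨⟨a, m⟩, h⟩
          ext <;> simp at h ⊢; omega
        right_inv := fun m => rfl }
  rw [Fintype.card_subtype_compl, hanti, Fintype.card_prod, Fintype.card_fin, Fintype.card_fin]

def bEntry (g : BIndex p q → ℝ) (a m : ℕ) : ℝ :=
  if h : a < p ∧ m < q ∧ a + m + 1 ≠ p then g ⟨(⟨a, h.1⟩, ⟨m, h.2.1⟩), h.2.2⟩ else 0

lemma bEntry_add (g h : BIndex p q → ℝ) (a m : ℕ) :
    bEntry (g + h) a m = bEntry g a m + bEntry h a m := by
  unfold bEntry; split_ifs <;> simp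

lemma bEntry_smul (c : ℝ) (g : BIndex p q → ℝ) (a m : ℕ) :
    bEntry (c • g) a m = c * bEntry g a m := by
  unfold bEntry; split_ifs <;> simp

lemma bEntry_of_add_eq (g : BIndex p q → ℝ) {a m : ℕ} (h : a + m + 1 = p) :
    bEntry g a m = 0 := by
  simp [bEntry, h]

lemma bEntry_single (idx : BIndex p q) (a b : ℕ) :
    bEntry (Pi.single idx 1) a b = if a = idx.1.1 ∧ b = idx.1.2 then 1 else 0 := by
  obtain ⟨⟨a₀, b₀⟩, h₀⟩ := idx
  unfold bEntry
  dsimp only at h₀ ⊢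
  split_ifs with h₁ h₂ h₂
  · obtain ⟨rfl, rfl⟩ := h₂
    simp
  · rw [Pi.single_apply, if_neg]
    simp only [Subtype.ext_iff, Prod.ext_iff, Fin.ext_iff]
    exact h₂
  · exact absurd ⟨by omega, by omega, by omega⟩ h₁
  · rfl

def upper (g : BIndex p q → ℝ) : Matrix (Fin (p + q)) (Fin (p + q)) ℝ := Matrix.of fun r c =>
  if (r : ℕ) < c then
    if (c : ℕ) < p then (if p - q ≤ (c : ℕ) then bEntry g r (p - 1 - c) else 0)
    else if (r : ℕ) < p then bEntry g r (c - p)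
    else - bEntry g (2 * p - 1 - r) (c - p)
  else 0

lemma upper_add (g h : BIndex p q → ℝ) : upper (g + h) = upper g + upper h := by
  ext r c
  simp only [upper, Matrix.of_apply, Matrix.add_apply, bEntry_add]
  split_ifs <;> ring

lemma upper_smul (a : ℝ) (g : BIndex p q → ℝ) : upper (a • g) = a • upper g := by
  ext r c
  simp only [upper, Matrix.of_apply, Matrix.smul_apply, bEntry_smul, smul_eq_mul]
  split_ifs <;> ring

/-- The element of `𝔫` with `B`-block `g`: the element `U - J Uᵀ J` of `𝔰𝔬(p,q)` whose strictly
upper triangular part is `U = upper g`. -/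
def phi (p q : ℕ) : (BIndex p q → ℝ) →ₗ[ℝ] Matrix (Fin (p + q)) (Fin (p + q)) ℝ where
  toFun g := upper g - Jmat p q * (upper g)ᵀ * Jmat p q
  map_add' g h := by
    simp only [upper_add, Matrix.transpose_add, Matrix.mul_add, Matrix.add_mul]
    abel
  map_smul' a g := by
    simp only [upper_smul, Matrix.transpose_smul, Matrix.mul_smul, Matrix.smul_mul,
      RingHom.id_apply, smul_sub]

lemma phi_apply (g : BIndex p q → ℝ) (r c : Fin (p + q)) :
    phi p q g r c = upper g r c
      - (if (r : ℕ) < p then 1 else -1) * (if (c : ℕ) < p then 1 else -1) * upper g c r := by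
  simp [phi, Jmat, Matrix.diagonal_mul, Matrix.mul_diagonal]

section Entries

variable (g : BIndex p q → ℝ)

lemma phi_low_low (a b : Fin (p + q)) (ha : (a : ℕ) < p - q) (hb : (b : ℕ) < p - q) :
    phi p q g a b = 0 := by
  simp only [phi_apply, upper, Matrix.of_apply]
  split_ifs <;> first | omega | ring

lemma phi_low_down (a : Fin (p + q)) (i : Fin q) (ha : (a : ℕ) < p - q) :
    phi p q g a (down i) = bEntry g a i := by
  simp only [phi_apply, upper, Matrix.of_apply]
  split_ifs <;> simp only [val_down] at * <;> try omega
  simp only [mul_zero, sub_zero]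
  congr 1
  omega

lemma phi_low_up (a : Fin (p + q)) (i : Fin q) (ha : (a : ℕ) < p - q) :
    phi p q g a (up i) = bEntry g a i := by
  simp only [phi_apply, upper, Matrix.of_apply]
  split_ifs <;> simp only [val_up] at * <;> try omega
  simp only [mul_zero, sub_zero]
  congr 1
  omega

lemma phi_down_up (hqp : q ≤ p) (i j : Fin q) :
    phi p q g (down j) (up i) = bEntry g (p - 1 - j) i := by
  simp only [phi_apply, upper, Matrix.of_apply]
  split_ifs <;> simp only [val_down, val_up] at * <;> try omega
  simp only [mul_zero, sub_zero]
  congr 1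
  omega

lemma phi_up_down (hqp : q ≤ p) (i j : Fin q) :
    phi p q g (up j) (down i) = bEntry g (p - 1 - i) j := by
  simp only [phi_apply, upper, Matrix.of_apply]
  split_ifs <;> simp only [val_down, val_up] at * <;> try omega
  simp only [zero_sub, mul_one, neg_mul, neg_neg, one_mul]
  congr 1
  omega

lemma phi_down_down (hqp : q ≤ p) (i j : Fin q) : phi p q g (down j) (down i) =
    if j < i then - bEntry g (p - 1 - i) j else bEntry g (p - 1 - j) i := by
  simp only [phi_apply, upper, Matrix.of_apply]
  split_ifs <;> simp only [val_down, Fin.lt_def] at * <;> try omega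
  all_goals simp only [one_mul, zero_sub, sub_zero, mul_zero, neg_inj]
  all_goals first
    | (congr 1; omega)
    | rw [bEntry_of_add_eq g (by omega)]

lemma phi_up_up (hqp : q ≤ p) (i j : Fin q) : phi p q g (up j) (up i) =
    if j < i then - bEntry g (p - 1 - j) i else bEntry g (p - 1 - i) j := by
  simp only [phi_apply, upper, Matrix.of_apply]
  split_ifs <;> simp only [val_up, Fin.lt_def] at * <;> try omega
  all_goals simp only [zero_sub, sub_zero, mul_zero, neg_mul, neg_neg, one_mul, neg_inj]
  all_goals first
    | (congr 1 <;> omega)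
    | rw [bEntry_of_add_eq g (by omega)]

lemma phi_mem_nSet (hqp : q ≤ p) : phi p q g ∈ nSet p q := by
  refine (mem_nSet_iff hqp _).2 ⟨sub_Jmat_mul_transpose_mul_Jmat_mem_soSet _,
    fun a b => phi_low_low g _ _ (by simp) (by simp), fun i => ?_,
    fun a i => ?_, fun i j hij => ?_, fun i j hij => ?_⟩
  · rw [phi_down_up g hqp, bEntry_of_add_eq g (by omega)]
  · rw [phi_low_down g _ i (by simp), phi_low_up g _ i (by simp)]
  · rw [phi_down_down g hqp, if_neg (not_lt.2 hij.le), phi_down_up g hqp]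
  · rw [phi_up_up g hqp, if_pos hij, phi_down_up g hqp]

end Entries

variable (p q) in
def bBlock : Matrix (Fin (p + q)) (Fin (p + q)) ℝ →ₗ[ℝ] (BIndex p q → ℝ) where
  toFun X am := X (Fin.castAdd q am.1.1) (up am.1.2)
  map_add' _ _ := rfl
  map_smul' _ _ := rfl

lemma bBlock_phi (g : BIndex p q → ℝ) : bBlock p q (phi p q g) = g := by
  funext ⟨⟨a, m⟩, h⟩
  have : ¬ (Fin.natAdd p m ≤ Fin.castAdd q a) := by rw [Fin.le_def]; simp; omega
  simp [bBlock, phi_apply, upper, up, bEntry, h, this]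

lemma phi_injective : Function.Injective (phi p q) :=
  Function.LeftInverse.injective (g := bBlock p q) bBlock_phi

lemma eq_zero_of_mem_nSet_of_bBlock_eq_zero (hqp : q ≤ p)
    {X : Matrix (Fin (p + q)) (Fin (p + q)) ℝ} (hX : X ∈ nSet p q) (hB : bBlock p q X = 0) :
    X = 0 := by
  obtain ⟨hso, hlow, hanti, hlow_down, hdown, hup⟩ := (mem_nSet_iff hqp X).1 hX
  have hB' (a : Fin (p + q)) (i : Fin q) (ha : (a : ℕ) < p) : X a (up i) = 0 := by
    by_cases hai : (a : ℕ) + i + 1 = p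
    · obtain rfl : a = down i := Fin.ext (by simp; omega)
      exact hanti i
    · exact congrFun hB ⟨(⟨a, ha⟩, i), hai⟩
  refine eq_zero_of_mem_soSet_of_upper_eq_zero hso fun r c hrc => ?_
  rw [Fin.lt_def] at hrc
  rcases lt_or_ge (c : ℕ) p with hc | hc
  · by_cases hcq : (c : ℕ) < p - q
    · exact hlow ⟨r, by omega⟩ ⟨c, hcq⟩
    obtain ⟨i, rfl⟩ := exists_eq_down hqp c (by omega) hc
    by_cases hrq : (r : ℕ) < p - q
    · exact (hlow_down ⟨r, hrq⟩ i).trans (hB' r i (by omega))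
    obtain ⟨j, rfl⟩ := exists_eq_down hqp r (by omega) (by omega)
    rw [hdown i j (Fin.lt_def.2 (by simp at hrc; omega)), hB' _ i (by simp; omega)]
  · obtain ⟨i, rfl⟩ := exists_eq_up c hc
    by_cases hr : (r : ℕ) < p
    · exact hB' r i hr
    obtain ⟨j, rfl⟩ := exists_eq_up r (by omega)
    rw [hup j i (Fin.lt_def.2 (by simp at hrc; omega)), hB' _ i (by simp; omega), neg_zero]

lemma range_phi (hqp : q ≤ p) : LinearMap.range (phi p q) = nSub p q := by
  refine le_antisymm ?_ fun X hX => ⟨bBlock p q X, ?_⟩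
  · rintro _ ⟨g, rfl⟩
    exact phi_mem_nSet g hqp
  · have hmem : X - phi p q (bBlock p q X) ∈ nSub p q := sub_mem hX (phi_mem_nSet _ hqp)
    have hB : bBlock p q (X - phi p q (bBlock p q X)) = 0 := by
      rw [map_sub, bBlock_phi, sub_self]
    exact (sub_eq_zero.1 (eq_zero_of_mem_nSet_of_bBlock_eq_zero hqp hmem hB)).symm

lemma finrank_nSub (hqp : q ≤ p) : finrank ℝ (nSub p q) = p * q - q := by
  rw [← range_phi hqp, LinearMap.finrank_range_of_inj phi_injective,
    Module.finrank_fintype_fun_eq_card, card_bIndex hqp]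

variable (p) in
/-- `∑ tᵢ wᵢ`, with `wᵢ = e_{p-i+1} - e_{p+i}` in the paper's indexing. -/
def wSum (t : Fin q → ℝ) : Fin (p + q) → ℝ :=
  ∑ i, t i • (Pi.single (down i) 1 - Pi.single (up i) 1)

lemma wSum_apply (t : Fin q → ℝ) (r : Fin (p + q)) :
    wSum p t r = ∑ i, t i * ((if r = down i then 1 else 0) - if r = up i then 1 else 0) := by
  simp [wSum, Finset.sum_apply, Pi.single_apply]

lemma wSum_low (t : Fin q → ℝ) (r : Fin (p + q)) (hr : (r : ℕ) < p - q) : wSum p t r = 0 := by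
  rw [wSum_apply]
  refine Finset.sum_eq_zero fun i _ => ?_
  rw [if_neg (fun h => by rw [h, val_down] at hr; omega),
    if_neg (fun h => by rw [h, val_up] at hr; omega)]
  ring

lemma wSum_down (hqp : q ≤ p) (t : Fin q → ℝ) (i : Fin q) : wSum p t (down i) = t i := by
  simp [wSum_apply, (down_injective hqp).eq_iff, down_ne_up hqp]

lemma wSum_up (hqp : q ≤ p) (t : Fin q → ℝ) (i : Fin q) : wSum p t (up i) = - t i := by
  simp [wSum_apply, up_injective.eq_iff, (down_ne_up hqp _ _).symm]

lemma eq_wSum (hqp : q ≤ p) (x : Fin (p + q) → ℝ)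
    (hlow : ∀ r : Fin (p + q), (r : ℕ) < p - q → x r = 0)
    (hpair : ∀ i, x (down i) + x (up i) = 0) : x = wSum p (fun i => x (down i)) := by
  funext r
  rcases lt_or_ge (r : ℕ) p with hr | hr
  · by_cases hrq : (r : ℕ) < p - q
    · rw [hlow r hrq, wSum_low _ r hrq]
    obtain ⟨i, rfl⟩ := exists_eq_down hqp r (by omega) hr
    rw [wSum_down hqp]
  · obtain ⟨i, rfl⟩ := exists_eq_up r hr
    rw [wSum_up hqp]
    linarith [hpair i]

lemma mulVec_wSum (X : Matrix (Fin (p + q)) (Fin (p + q)) ℝ) (t : Fin q → ℝ) (r : Fin (p + q)) :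
    (X *ᵥ wSum p t) r = ∑ i, t i * (X r (down i) - X r (up i)) := by
  simp [wSum, Matrix.mulVec_sum, Matrix.mulVec_smul, Matrix.mulVec_sub, Finset.sum_apply, mul_sub]

def rowSum (g : BIndex p q → ℝ) (t : Fin q → ℝ) (j : Fin q) : ℝ :=
  ∑ i, t i * if j < i then bEntry g (p - 1 - j) i + bEntry g (p - 1 - i) j else 0

section Stabilizer

variable (t : Fin q → ℝ)

section RowSum

variable (g : BIndex p q → ℝ)

lemma phi_mulVec_wSum_low (r : Fin (p + q)) (hr : (r : ℕ) < p - q) :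
    (phi p q g *ᵥ wSum p t) r = 0 := by
  simp [mulVec_wSum, phi_low_down g r _ hr, phi_low_up g r _ hr]

lemma phi_mulVec_wSum_down (hqp : q ≤ p) (j : Fin q) :
    (phi p q g *ᵥ wSum p t) (down j) = - rowSum g t j := by
  rw [mulVec_wSum, rowSum, ← Finset.sum_neg_distrib]
  refine Finset.sum_congr rfl fun i _ => ?_
  rw [phi_down_down g hqp, phi_down_up g hqp]
  split_ifs <;> ring

lemma phi_mulVec_wSum_up (hqp : q ≤ p) (j : Fin q) :
    (phi p q g *ᵥ wSum p t) (up j) = rowSum g t j := by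
  rw [mulVec_wSum, rowSum]
  refine Finset.sum_congr rfl fun i _ => ?_
  rw [phi_up_up g hqp, phi_up_down g hqp]
  split_ifs <;> ring

lemma phi_mulVec_wSum_eq_zero_iff (hqp : q ≤ p) :
    phi p q g *ᵥ wSum p t = 0 ↔ ∀ j, rowSum g t j = 0 := by
  refine ⟨fun h j => ?_, fun h => funext fun r => ?_⟩
  · rw [← phi_mulVec_wSum_up t g hqp, h, Pi.zero_apply]
  rcases lt_or_ge (r : ℕ) p with hr | hr
  · by_cases hrq : (r : ℕ) < p - q
    · exact phi_mulVec_wSum_low t g r hrq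
    obtain ⟨j, rfl⟩ := exists_eq_down hqp r (by omega) hr
    rw [phi_mulVec_wSum_down t g hqp, h, neg_zero, Pi.zero_apply]
  · obtain ⟨j, rfl⟩ := exists_eq_up r hr
    rw [phi_mulVec_wSum_up t g hqp, h, Pi.zero_apply]

lemma rowSum_eq_zero_of_le {m j : Fin q} (ht : ∀ i, m < i → t i = 0) (hj : m ≤ j) :
    rowSum g t j = 0 := by
  refine Finset.sum_eq_zero fun i _ => ?_
  split_ifs with hji
  · rw [ht i (hj.trans_lt hji), zero_mul]
  · rw [mul_zero]

end RowSum

variable (p) in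
def stabilizerEqns (m : Fin q) : (BIndex p q → ℝ) →ₗ[ℝ] (Fin m → ℝ) where
  toFun g k := (phi p q g *ᵥ wSum p t) (up (Fin.castLE m.isLt.le k))
  map_add' g h := by ext k; simp [Matrix.add_mulVec]
  map_smul' c g := by ext k; simp [Matrix.smul_mulVec]

lemma stabilizerEqns_apply (hqp : q ≤ p) (m : Fin q) (g : BIndex p q → ℝ) (k : Fin m) :
    stabilizerEqns p t m g k = rowSum g t (Fin.castLE m.isLt.le k) :=
  phi_mulVec_wSum_up t g hqp _

lemma stabilizerEqns_eq_zero_iff (hqp : q ≤ p) {m : Fin q} (ht : ∀ i, m < i → t i = 0)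
    (g : BIndex p q → ℝ) : stabilizerEqns p t m g = 0 ↔ phi p q g *ᵥ wSum p t = 0 := by
  rw [phi_mulVec_wSum_eq_zero_iff t g hqp]
  refine ⟨fun h j => ?_, fun h => funext fun k => (stabilizerEqns_apply t hqp m g k).trans (h _)⟩
  rcases lt_or_ge j m with hjm | hjm
  · have hj := congrFun h ⟨j, hjm⟩
    rwa [stabilizerEqns_apply t hqp] at hj
  · exact rowSum_eq_zero_of_le t g ht hjm

lemma stabilizerEqns_single (hqp : q ≤ p) (m : Fin q) (k : Fin m) :
    stabilizerEqns p t m (Pi.single ⟨(⟨p - 1 - k, by omega⟩, m), by simp; omega⟩ 1)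
      = t m • Pi.single k 1 := by
  funext k'
  have hk := k.isLt
  have hk' := k'.isLt
  rw [stabilizerEqns_apply t hqp, rowSum, Finset.sum_eq_single m]
  · simp only [bEntry_single, Fin.lt_def, Fin.coe_castLE, if_pos hk', Pi.smul_apply,
      Pi.single_apply, Fin.ext_iff, smul_eq_mul, and_true]
    rw [if_neg (by omega : ¬(p - 1 - (m : ℕ) = p - 1 - k ∧ (k' : ℕ) = m)), add_zero]
    split_ifs <;> first | omega | ring
  · intro i _ hi
    have hi' := Fin.val_ne_of_ne hi
    simp only [bEntry_single, Fin.coe_castLE]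
    rw [if_neg (show ¬((p - 1 - k' : ℕ) = p - 1 - k ∧ (i : ℕ) = m) by omega),
      if_neg (show ¬((p - 1 - i : ℕ) = p - 1 - k ∧ (k' : ℕ) = m) by omega)]
    simp
  · simp

lemma stabilizerEqns_surjective (hqp : q ≤ p) (m : Fin q) (htm : t m ≠ 0) :
    Function.Surjective (stabilizerEqns p t m) := by
  intro v
  refine ⟨∑ k : Fin m, (v k / t m) •
    Pi.single (⟨(⟨p - 1 - k, by omega⟩, m), by simp; omega⟩ : BIndex p q) 1, ?_⟩
  simp only [map_sum, map_smul, stabilizerEqns_single t hqp, smul_smul, div_mul_cancel₀ _ htm]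
  ext k
  simp [Pi.single_apply]

lemma finrank_nSub_inf_kerAt_wSum_add (hqp : q ≤ p) (m : Fin q) (htm : t m ≠ 0)
    (ht : ∀ i, m < i → t i = 0) :
    finrank ℝ ↥(nSub p q ⊓ kerAt (wSum p t)) + m = p * q - q := by
  have hmap : (LinearMap.ker (stabilizerEqns p t m)).map (phi p q)
      = nSub p q ⊓ kerAt (wSum p t) := by
    ext X
    rw [Submodule.mem_inf, ← range_phi hqp]
    constructor
    · rintro ⟨g, hg, rfl⟩
      exact ⟨⟨g, rfl⟩, (stabilizerEqns_eq_zero_iff t hqp ht g).1 hg⟩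
    · rintro ⟨⟨g, rfl⟩, hX⟩
      exact ⟨g, (stabilizerEqns_eq_zero_iff t hqp ht g).2 hX, rfl⟩
  have hrank := LinearMap.finrank_range_add_finrank_ker (stabilizerEqns p t m)
  rw [LinearMap.range_eq_top.2 (stabilizerEqns_surjective t hqp m htm), finrank_top,
    Module.finrank_fin_fun, Module.finrank_fintype_fun_eq_card, card_bIndex hqp] at hrank
  rw [← hmap, ← (Submodule.equivMapOfInjective _ phi_injective _).finrank_eq]
  omega

end Stabilizer

end IwasawaN

open IwasawaN

theorem nSub_stabilizer_dim_case3_general (p q : ℕ) (hpq : q ≤ p)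
    (x : Fin (p + q) → ℝ)
    (hzero1 : ∀ j, 1 ≤ j → j ≤ p - q → vent x j = 0)
    (hzero2 : ∀ i, 1 ≤ i → i ≤ q → vent x (p - i + 1) + vent x (p + i) = 0)
    (l : ℕ) (hl1 : 1 ≤ l) (hl2 : l ≤ q) (hlne : vent x (p + l) ≠ 0)
    (hlmax : ∀ j, l < j → j ≤ q → vent x (p + j) = 0) :
    Module.finrank ℝ ↥(nSub p q ⊓ kerAt x) = q * (p - 1) - (l - 1) ∧
    Module.finrank ℝ ↥(nSub p q) - Module.finrank ℝ ↥(nSub p q ⊓ kerAt x) = l - 1 := by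
  have hpair (i : Fin q) : x (down i) + x (up i) = 0 := by
    have h := hzero2 (i + 1) (by omega) (by omega)
    rwa [vent_eq_apply x (down i) (by simp; omega), vent_eq_apply x (up i) (by simp; omega)] at h
  have hx : x = wSum p (fun i => x (down i)) := eq_wSum hpq x
    (fun r hr => vent_eq_apply x r rfl ▸ hzero1 (r + 1) (by omega) (by omega)) hpair
  have hdown (i : Fin q) : x (down i) = - vent x (p + (i + 1)) := by
    rw [eq_neg_of_add_eq_zero_left (hpair i), vent_eq_apply x (up i) (by simp; omega)]
  obtain ⟨m, hml⟩ : ∃ m : Fin q, (m : ℕ) + 1 = l := ⟨⟨l - 1, by omega⟩, by simp; omega⟩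
  have htm : x (down m) ≠ 0 := by
    rw [hdown, hml]
    exact neg_ne_zero.2 hlne
  have ht (i : Fin q) (hi : m < i) : x (down i) = 0 := by
    rw [Fin.lt_def] at hi
    rw [hdown, hlmax _ (by omega) (by omega), neg_zero]
  have hstab := finrank_nSub_inf_kerAt_wSum_add (fun i => x (down i)) hpq m htm ht
  rw [← hx] at hstab
  have hmul : q * (p - 1) = p * q - q := by rw [Nat.mul_sub_one, Nat.mul_comm]
  have hdim := finrank_nSub hpq
  constructor <;> omega

/-- Let `x ≠ 0` with `x^j = 0` for all `1 ≤ j ≤ p-q` and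
`x^{p-i+1} + x^{p+i} = 0` for all `1 ≤ i ≤ q`, and let `l` be the largest index in
`{1, ..., q}` with `x^{p+l} ≠ 0`. Then `dim 𝔫_x = q(p-1) - (l-1)`; equivalently,
`dim 𝔫 - dim 𝔫_x = l-1`. -/
theorem nSub_stabilizer_dim_case3 (p q : ℕ) (hq : 1 ≤ q) (hpq : q ≤ p)
    (x : Fin (p + q) → ℝ) (hx : x ≠ 0)
    (hzero1 : ∀ j, 1 ≤ j → j ≤ p - q → vent x j = 0)
    (hzero2 : ∀ i, 1 ≤ i → i ≤ q → vent x (p - i + 1) + vent x (p + i) = 0)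
    (l : ℕ) (hl1 : 1 ≤ l) (hl2 : l ≤ q) (hlne : vent x (p + l) ≠ 0)
    (hlmax : ∀ j, l < j → j ≤ q → vent x (p + j) = 0) :
    Module.finrank ℝ ↥(nSub p q ⊓ kerAt x) = q * (p - 1) - (l - 1) ∧
    Module.finrank ℝ ↥(nSub p q) - Module.finrank ℝ ↥(nSub p q ⊓ kerAt x) = l - 1 :=
  nSub_stabilizer_dim_case3_general p q hpq x hzero1 hzero2 l hl1 hl2 hlne hlmax
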